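/- Let K ⊆ K' be nonempty compact convex subsets of ℝ^d (d ≥ 1) with positive volume. Let 𝒜(Ω) = inf{|Ω Δ B|/|B| : B a ball with |B| = |Ω|} denote the Fraenkel asymmetry. Then |𝒜(K') − 𝒜(K)| ≤ 4·|K' \ K| / |K|. -/

import Mathlib

/-!
If `B` is a ball with `|B| = |Ω|`, the concentric ball `B'` with `|B'| = |Ω'|` satisfies
`|B ∆ B'| = ||Ω| - |Ω'|| ≤ |Ω ∆ Ω'|`, so the triangle inequality for `∆` gives
`|Ω' ∆ B'| ≤ |Ω ∆ B| + 2 |Ω ∆ Ω'|`. Changing the normalisation from `|Ω|` to `|Ω'|` costs at most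
another `2 |Ω ∆ Ω'| / |Ω'|` because `|Ω ∆ B| ≤ 2 |Ω|`. Hence
`𝒜(Ω') ≤ 𝒜(Ω) + 4 |Ω ∆ Ω'| / |Ω'|` for any two sets of finite positive measure, and for `K ⊆ K'`
both directions are bounded by `4 |K' \ K| / |K|`.
-/

open MeasureTheory

noncomputable def fraenkelAsymmetry {d : ℕ} (Ω : Set (EuclideanSpace ℝ (Fin d))) : ℝ :=
  sInf {x : ℝ | ∃ (c : EuclideanSpace ℝ (Fin d)) (r : ℝ), 0 < r ∧
    volume (Metric.ball c r) = volume Ω ∧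
    x = (volume (symmDiff Ω (Metric.ball c r))).toReal / (volume (Metric.ball c r)).toReal}

open Metric Set Module
open scoped ENNReal symmDiff

theorem exists_pos_measure_ball_eq {E : Type*} [NormedAddCommGroup E] [NormedSpace ℝ E]
    [MeasurableSpace E] [BorelSpace E] [FiniteDimensional ℝ E] [Nontrivial E]
    (μ : Measure E) [μ.IsAddHaarMeasure] (c : E) {v : ℝ≥0∞} (h0 : v ≠ 0) (htop : v ≠ ∞) :
    ∃ r, 0 < r ∧ μ (ball c r) = v := by
  set V := μ (ball (0 : E) 1)
  have hV0 : V ≠ 0 := (measure_ball_pos μ 0 one_pos).ne'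
  have hVtop : V ≠ ∞ := measure_ball_lt_top.ne
  have hn : finrank ℝ E ≠ 0 := Module.finrank_pos.ne'
  have hq : 0 < (v / V).toReal :=
    ENNReal.toReal_pos (ENNReal.div_pos h0 hVtop).ne' (ENNReal.div_ne_top htop hV0)
  refine ⟨(v / V).toReal ^ ((finrank ℝ E : ℝ)⁻¹), Real.rpow_pos_of_pos hq _, ?_⟩
  rw [Measure.addHaar_ball_of_pos μ c (Real.rpow_pos_of_pos hq _),
    Real.rpow_inv_natCast_pow hq.le hn,
    ENNReal.ofReal_toReal (ENNReal.div_ne_top htop hV0), ENNReal.div_mul_cancel hV0 hVtop]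

theorem measureReal_ball_symmDiff_ball {α : Type*} [PseudoMetricSpace α] [ProperSpace α]
    [MeasurableSpace α] [OpensMeasurableSpace α] (μ : Measure α) [IsFiniteMeasureOnCompacts μ]
    (c : α) (r r' : ℝ) :
    μ.real (ball c r ∆ ball c r') = |μ.real (ball c r) - μ.real (ball c r')| := by
  wlog h : r ≤ r' generalizing r r'
  · rw [symmDiff_comm, abs_sub_comm]
    exact this r' r (le_of_not_ge h)
  have hsub : ball c r ⊆ ball c r' := ball_subset_ball h
  rw [symmDiff_of_le hsub, measureReal_sdiff hsub measurableSet_ball measure_ball_lt_top.ne,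
    abs_sub_comm, abs_of_nonneg (sub_nonneg.mpr (measureReal_mono hsub measure_ball_lt_top.ne))]

theorem measureReal_symmDiff_le_add_two_mul {α : Type*} [MeasurableSpace α] {μ : Measure α}
    {s s' t t' : Set α} (hs : μ s ≠ ∞) (hs' : μ s' ≠ ∞) (ht : μ t ≠ ∞)
    (htt' : μ.real (t ∆ t') ≤ μ.real (s ∆ s')) :
    μ.real (s' ∆ t') ≤ μ.real (s ∆ t) + 2 * μ.real (s ∆ s') := by
  calc μ.real (s' ∆ t') ≤ μ.real (s' ∆ s) + μ.real (s ∆ t') :=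
        measureReal_symmDiff_le (s := s') (t := s) t' hs' hs
    _ ≤ μ.real (s' ∆ s) + (μ.real (s ∆ t) + μ.real (t ∆ t')) := by
        gcongr; exact measureReal_symmDiff_le (s := s) (t := t) t' hs ht
    _ ≤ μ.real (s ∆ t) + 2 * μ.real (s ∆ s') := by rw [symmDiff_comm s' s]; linarith

theorem div_le_div_add_four_mul_div {t t' m m' δ : ℝ} (hm : 0 < m) (hm' : 0 < m') (hδ : 0 ≤ δ)
    (ht₀ : 0 ≤ t) (ht : t ≤ 2 * m) (hmm' : m - m' ≤ δ) (htt' : t' ≤ t + 2 * δ) :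
    t' / m' ≤ t / m + 4 * δ / m' := by
  rw [div_add_div _ _ hm.ne' hm'.ne', div_le_div_iff₀ hm' (mul_pos hm hm')]
  nlinarith [mul_le_mul_of_nonneg_right htt' hm.le, mul_nonneg ht₀ hm'.le,
    mul_le_mul_of_nonneg_left hmm' ht₀, mul_le_mul_of_nonneg_right ht hδ]

section FraenkelAsymmetry

variable {d : ℕ}

theorem fraenkelAsymmetry_le {Ω : Set (EuclideanSpace ℝ (Fin d))} {c : EuclideanSpace ℝ (Fin d)}
    {r : ℝ} (hr : 0 < r) (hvol : volume (ball c r) = volume Ω) :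
    fraenkelAsymmetry Ω ≤ volume.real (Ω ∆ ball c r) / volume.real Ω := by
  refine csInf_le ⟨0, ?_⟩ ⟨c, r, hr, hvol, by rw [measureReal_def, measureReal_def, hvol]⟩
  rintro _ ⟨-, -, -, -, rfl⟩
  positivity

theorem le_fraenkelAsymmetry (hd : 1 ≤ d) {Ω : Set (EuclideanSpace ℝ (Fin d))}
    (h0 : volume Ω ≠ 0) (htop : volume Ω ≠ ∞) {a : ℝ}
    (h : ∀ c r, 0 < r → volume (ball c r) = volume Ω →
      a ≤ volume.real (Ω ∆ ball c r) / volume.real Ω) :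
    a ≤ fraenkelAsymmetry Ω := by
  have : Nonempty (Fin d) := ⟨⟨0, hd⟩⟩
  obtain ⟨r, hr, hvol⟩ := exists_pos_measure_ball_eq volume (0 : EuclideanSpace ℝ (Fin d)) h0 htop
  refine le_csInf ⟨_, 0, r, hr, hvol, rfl⟩ ?_
  rintro _ ⟨c, r, hr, hvol, rfl⟩
  simpa only [measureReal_def, hvol] using h c r hr hvol

theorem fraenkelAsymmetry_le_add (hd : 1 ≤ d) {Ω Ω' : Set (EuclideanSpace ℝ (Fin d))}
    (hΩ : NullMeasurableSet Ω) (hΩ' : NullMeasurableSet Ω') (h0 : volume Ω ≠ 0)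
    (htop : volume Ω ≠ ∞) (h0' : volume Ω' ≠ 0) (htop' : volume Ω' ≠ ∞) :
    fraenkelAsymmetry Ω' ≤ fraenkelAsymmetry Ω + 4 * volume.real (Ω ∆ Ω') / volume.real Ω' := by
  rw [← sub_le_iff_le_add]
  refine le_fraenkelAsymmetry hd h0 htop fun c r hr hB => ?_
  have : Nonempty (Fin d) := ⟨⟨0, hd⟩⟩
  obtain ⟨r', hr', hB'⟩ := exists_pos_measure_ball_eq volume c h0' htop'
  have hballs : volume.real (ball c r ∆ ball c r') ≤ volume.real (Ω ∆ Ω') := by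
    rw [measureReal_ball_symmDiff_ball, measureReal_def, measureReal_def, hB, hB',
      ← measureReal_def, ← measureReal_def]
    exact abs_measureReal_sub_le_measureReal_symmDiff' hΩ hΩ' htop htop'
  have hdiff_le : volume.real (Ω ∆ ball c r) ≤ 2 * volume.real Ω :=
    calc volume.real (Ω ∆ ball c r) ≤ volume.real (Ω ∪ ball c r) :=
          measureReal_mono symmDiff_subset_union (measure_union_ne_top htop measure_ball_lt_top.ne)
      _ ≤ volume.real Ω + volume.real (ball c r) := measureReal_union_le _ _
      _ = 2 * volume.real Ω := by simp only [measureReal_def, hB]; ring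
  have hvol_sub : volume.real Ω - volume.real Ω' ≤ volume.real (Ω ∆ Ω') :=
    (le_abs_self _).trans (abs_measureReal_sub_le_measureReal_symmDiff' hΩ hΩ' htop htop')
  rw [sub_le_iff_le_add]
  refine (fraenkelAsymmetry_le hr' hB').trans (div_le_div_add_four_mul_div
    (ENNReal.toReal_pos h0 htop) (ENNReal.toReal_pos h0' htop') measureReal_nonneg
    measureReal_nonneg hdiff_le hvol_sub ?_)
  exact measureReal_symmDiff_le_add_two_mul htop htop' measure_ball_lt_top.ne hballs

end FraenkelAsymmetry

theorem fraenkel_asymmetry_stability_general (d : ℕ) (hd : 1 ≤ d)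
    (K K' : Set (EuclideanSpace ℝ (Fin d)))
    (hK : IsCompact K) (hK' : IsCompact K')
    (hsub : K ⊆ K') (hvol : 0 < volume K) :
    |fraenkelAsymmetry K' - fraenkelAsymmetry K| ≤
      4 * (volume (K' \ K)).toReal / (volume K).toReal := by
  have hKm : NullMeasurableSet K := hK.measurableSet.nullMeasurableSet
  have hK'm : NullMeasurableSet K' := hK'.measurableSet.nullMeasurableSet
  have htop : volume K ≠ ∞ := hK.measure_lt_top.ne
  have htop' : volume K' ≠ ∞ := hK'.measure_lt_top.ne
  have hvol' : volume K ≤ volume K' := measure_mono hsub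
  have hvol'0 : volume K' ≠ 0 := (hvol.trans_le hvol').ne'
  have hgrow := fraenkelAsymmetry_le_add hd hKm hK'm hvol.ne' htop hvol'0 htop'
  have hshrink := fraenkelAsymmetry_le_add hd hK'm hKm hvol'0 htop' hvol.ne' htop
  rw [symmDiff_of_le hsub] at hgrow
  rw [symmDiff_of_ge hsub] at hshrink
  have hdenom :
      4 * volume.real (K' \ K) / volume.real K' ≤ 4 * volume.real (K' \ K) / volume.real K :=
    div_le_div_of_nonneg_left (by positivity) (ENNReal.toReal_pos hvol.ne' htop)
      (measureReal_mono hsub htop')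
  rw [← measureReal_def, ← measureReal_def, abs_sub_le_iff]
  exact ⟨by linarith, by linarith⟩

theorem fraenkel_asymmetry_stability (d : ℕ) (hd : 1 ≤ d)
    (K K' : Set (EuclideanSpace ℝ (Fin d)))
    (hK : IsCompact K) (hK' : IsCompact K')
    (hKc : Convex ℝ K) (hK'c : Convex ℝ K')
    (hKne : K.Nonempty) (hK'ne : K'.Nonempty)
    (hsub : K ⊆ K') (hvol : 0 < volume K) :
    |fraenkelAsymmetry K' - fraenkelAsymmetry K| ≤
      4 * (volume (K' \ K)).toReal / (volume K).toReal :=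
  fraenkel_asymmetry_stability_general d hd K K' hK hK' hsub hvol
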